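/- arXiv:2506.12521 — 2 statements merged into one kernel-verified Lean document; each statement's English description precedes it below -/
import Mathlib

section
/- Let A be a C-hyperideal of a commutative multiplicative hyperring G and S a multiplicative closed subset of G with A ∩ S = ∅. Then A is a quasi S-primary hyperideal of G if and only if rad(A) is an S-prime hyperideal of G. -/
/-!
Two facts about hyperproducts carry the proof. First, `rad A` is a hyperideal: `(x + y)ᵐ⁺ⁿ` lies
in the sums of the monomials `xⁱ ∘ yʲ` with `i + j = m + n`, each of which contains a factor `xᵐ`
or `yⁿ`. Second, for a C-hyperideal a single element of a hyperproduct with a power in `A` forces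
the whole hyperproduct of powers into `A`: `u ∘ v ⊆ rad A` gives `x ∘ y ⊆ A` for some `x ∈ uⁿ`,
`y ∈ vⁿ`, where the quasi S-primary condition applies, and `t ∘ x ⊆ rad A` returns to
`t ∘ u ⊆ rad A`.
-/

open Set

/-- A commutative multiplicative hyperring: a commutative additive group with a
commutative, associative hyperoperation `hmul` satisfying `(-a)∘b = -(a∘b)`,
weak distributivity, and having an identity element `e` with `a ∈ e∘a`. -/
class MulHyperring (G : Type*) extends AddCommGroup G where
  hmul : G → G → Set G
  hmul_nonempty : ∀ a b : G, (hmul a b).Nonempty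
  hmul_comm : ∀ a b : G, hmul a b = hmul b a
  hmul_assoc : ∀ a b c : G, (⋃ x ∈ hmul a b, hmul x c) = ⋃ x ∈ hmul b c, hmul a x
  neg_hmul : ∀ a b : G, hmul (-a) b = (fun x => -x) '' (hmul a b)
  hmul_add : ∀ a b c : G,
    hmul a (b + c) ⊆ {x | ∃ u ∈ hmul a b, ∃ v ∈ hmul a c, x = u + v}
  e : G
  e_mem : ∀ a : G, a ∈ hmul e a

namespace MulHyperring

variable {G : Type*} [MulHyperring G]

/-- Hyperproduct of an element with a set: `a ∘ B = ⋃ b ∈ B, a ∘ b`. -/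
def smulSet (a : G) (B : Set G) : Set G := ⋃ b ∈ B, hmul a b

/-- Hyperproduct of two sets. -/
def setMul (A B : Set G) : Set G := ⋃ a ∈ A, ⋃ b ∈ B, hmul a b

/-- Hyperproduct `a₁ ∘ a₂ ∘ ⋯ ∘ aₙ` of a (nonempty) list of elements. -/
def hProd : List G → Set G
  | [] => ∅
  | [a] => {a}
  | a :: b :: l => smulSet a (hProd (b :: l))

/-- `aⁿ` as a hyperproduct. -/
def hPow (a : G) (n : ℕ) : Set G := hProd (List.replicate n a)

/-- `A` is a hyperideal of `G`. -/
def IsHyperideal (A : Set G) : Prop :=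
  A.Nonempty ∧ (∀ x ∈ A, ∀ y ∈ A, x - y ∈ A) ∧ ∀ r : G, ∀ x ∈ A, hmul r x ⊆ A

/-- `A` is a `C`-hyperideal: any finite hyperproduct meeting `A` is contained in `A`. -/
def IsCHyperideal (A : Set G) : Prop :=
  IsHyperideal A ∧ ∀ l : List G, l ≠ [] → (hProd l ∩ A).Nonempty → hProd l ⊆ A

/-- The radical of a (C-)hyperideal: `{a | aⁿ ⊆ A for some n ≥ 1}`. -/
def rad (A : Set G) : Set G := {a | ∃ n : ℕ, 1 ≤ n ∧ hPow a n ⊆ A}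

/-- The hyperideal generated by a set. -/
def idealGen (X : Set G) : Set G := ⋂₀ {A | IsHyperideal A ∧ X ⊆ A}

/-- The hyperideal product of two hyperideals. -/
def idealMul (A B : Set G) : Set G := idealGen (setMul A B)

/-- Multiplicative closed subset. -/
def IsMCS (S : Set G) : Prop :=
  e ∈ S ∧ ∀ s₁ ∈ S, ∀ s₂ ∈ S, (hmul s₁ s₂ ∩ S).Nonempty

/-- Prime hyperideal. -/
def IsPrime (P : Set G) : Prop :=
  IsHyperideal P ∧ P ≠ univ ∧ ∀ x y : G, hmul x y ⊆ P → x ∈ P ∨ y ∈ P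

/-- `S`-prime hyperideal. -/
def IsSPrime (S A : Set G) : Prop :=
  IsHyperideal A ∧ A ∩ S = ∅ ∧
    ∃ t ∈ S, ∀ u v : G, hmul u v ⊆ A → hmul t u ⊆ A ∨ hmul t v ⊆ A

/-- `S`-primary hyperideal. -/
def IsSPrimary (S A : Set G) : Prop :=
  IsHyperideal A ∧ A ∩ S = ∅ ∧
    ∃ t ∈ S, ∀ u v : G, hmul u v ⊆ A → hmul t u ⊆ A ∨ hmul t v ⊆ rad A

/-- Quasi `S`-primary hyperideal. -/
def IsQuasiSPrimary (S A : Set G) : Prop :=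
  IsHyperideal A ∧ A ∩ S = ∅ ∧
    ∃ t ∈ S, ∀ u v : G, hmul u v ⊆ A → hmul t u ⊆ rad A ∨ hmul t v ⊆ rad A

/-- Weakly quasi `S`-primary hyperideal. -/
def IsWeaklyQuasiSPrimary (S A : Set G) : Prop :=
  IsHyperideal A ∧ A ∩ S = ∅ ∧
    ∃ t ∈ S, ∀ u v : G, 0 ∉ hmul u v → hmul u v ⊆ A →
      hmul t u ⊆ rad A ∨ hmul t v ⊆ rad A

/-- Strongly quasi `S`-primary hyperideal. -/
def IsStronglyQuasiSPrimary (S A : Set G) : Prop :=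
  IsHyperideal A ∧ A ∩ S = ∅ ∧
    ∃ t ∈ S, ∀ u v : G, hmul u v ⊆ A →
      smulSet t (hPow u 2) ⊆ A ∨ hmul t v ⊆ rad A

/-- The residual `(B : x) = {y | y ∘ x ⊆ B}`. -/
def colon (B : Set G) (x : G) : Set G := {y | hmul y x ⊆ B}

end MulHyperring

theorem List.flatten_replicate_cons_perm {α : Type*} (a : α) (l : List α) : ∀ n : ℕ,
    (List.replicate n (a :: l)).flatten.Perm (List.replicate n a ++ (List.replicate n l).flatten)
  | 0 => .refl _
  | n + 1 => by
    simp only [List.replicate_succ, List.flatten_cons, List.cons_append]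
    exact ((List.flatten_replicate_cons_perm a l n).append_left l).trans
      (List.perm_append_comm_assoc ..) |>.cons a

theorem List.flatten_replicate_pair_perm {α : Type*} (a b : α) (n : ℕ) :
    (List.replicate n [a, b]).flatten.Perm (List.replicate n a ++ List.replicate n b) := by
  simpa using List.flatten_replicate_cons_perm a [b] n

namespace MulHyperring

variable {G : Type*} [MulHyperring G]

section HyperProduct

theorem smulSet_mono (a : G) {B C : Set G} (h : B ⊆ C) : smulSet a B ⊆ smulSet a C :=
  biUnion_subset_biUnion_left h

theorem hmul_subset_smulSet (a : G) {b : G} {B : Set G} (hb : b ∈ B) : hmul a b ⊆ smulSet a B :=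
  subset_biUnion_of_mem (u := hmul a) hb

theorem biUnion_hmul_smulSet (a b : G) (C : Set G) :
    ⋃ y ∈ hmul a b, smulSet y C = smulSet a (smulSet b C) := by
  calc ⋃ y ∈ hmul a b, smulSet y C = ⋃ c ∈ C, ⋃ y ∈ hmul a b, hmul y c := by
        ext; simp only [smulSet, mem_iUnion]; tauto
    _ = ⋃ c ∈ C, ⋃ x ∈ hmul b c, hmul a x := by simp only [hmul_assoc]
    _ = smulSet a (smulSet b C) := by
        ext; simp only [smulSet, mem_iUnion]; tauto

theorem smulSet_comm (a b : G) (C : Set G) :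
    smulSet a (smulSet b C) = smulSet b (smulSet a C) := by
  rw [← biUnion_hmul_smulSet, hmul_comm, biUnion_hmul_smulSet]

theorem hProd_cons (a : G) {l : List G} (hl : l ≠ []) : hProd (a :: l) = smulSet a (hProd l) := by
  cases l with
  | nil => exact absurd rfl hl
  | cons b l => rfl

theorem hProd_pair (a b : G) : hProd [a, b] = hmul a b := by
  simp [hProd, smulSet]

theorem ne_nil_of_mem_hProd {x : G} {l : List G} (hx : x ∈ hProd l) : l ≠ [] := by
  rintro rfl
  exact hx

theorem hProd_nonempty : ∀ {l : List G}, l ≠ [] → (hProd l).Nonempty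
  | [], h => absurd rfl h
  | [a], _ => ⟨a, rfl⟩
  | a :: b :: l, _ => by
    obtain ⟨x, hx⟩ := hProd_nonempty (l := b :: l) (by simp)
    obtain ⟨y, hy⟩ := hmul_nonempty a x
    exact ⟨y, hmul_subset_smulSet a hx hy⟩

theorem hPow_nonempty (a : G) {n : ℕ} (hn : 1 ≤ n) : (hPow a n).Nonempty :=
  hProd_nonempty ((List.replicate_eq_nil_iff _).not.mpr (by omega))

theorem hProd_perm {l l' : List G} (h : l.Perm l') : hProd l = hProd l' := by
  induction h with
  | nil => rfl
  | @cons x l₁ l₂ h ih =>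
    rcases eq_or_ne l₁ [] with rfl | hl₁
    · rw [List.nil_perm.mp h]
    · have hl₂ : l₂ ≠ [] := by rintro rfl; exact hl₁ h.eq_nil
      rw [hProd_cons x hl₁, hProd_cons x hl₂, ih]
  | swap a b l =>
    cases l with
    | nil => rw [hProd_pair, hProd_pair, hmul_comm]
    | cons c l => exact smulSet_comm b a _
  | trans _ _ ih₁ ih₂ => rw [ih₁, ih₂]

theorem hProd_cons_subset_append {x : G} {l₁ : List G} (hx : x ∈ hProd l₁) (l₂ : List G) :
    hProd (x :: l₂) ⊆ hProd (l₁ ++ l₂) := by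
  rcases eq_or_ne l₂ [] with rfl | hl₂
  · simpa [hProd] using hx
  induction l₁ generalizing x with
  | nil => exact (ne_nil_of_mem_hProd hx rfl).elim
  | cons a l₁ ih =>
    rcases eq_or_ne l₁ [] with rfl | hl₁
    · rw [show x = a from hx]
      rfl
    rw [hProd_cons a hl₁] at hx
    obtain ⟨y, hy, hxy⟩ := mem_iUnion₂.mp hx
    rw [hProd_cons x hl₂, List.cons_append, hProd_cons a (by simp [hl₁])]
    calc smulSet x (hProd l₂) ⊆ ⋃ x' ∈ hmul a y, smulSet x' (hProd l₂) :=
          subset_biUnion_of_mem (u := fun x' => smulSet x' (hProd l₂)) hxy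
      _ = smulSet a (hProd (y :: l₂)) := by rw [biUnion_hmul_smulSet, hProd_cons y hl₂]
      _ ⊆ smulSet a (hProd (l₁ ++ l₂)) := smulSet_mono a (ih hy)

theorem hProd_replicate_append_subset {x : G} {l : List G} (hx : x ∈ hProd l) :
    ∀ (n : ℕ) (l₀ : List G),
      hProd (List.replicate n x ++ l₀) ⊆ hProd ((List.replicate n l).flatten ++ l₀)
  | 0, _ => le_rfl
  | n + 1, l₀ => by
    calc hProd (List.replicate (n + 1) x ++ l₀) = hProd (x :: (List.replicate n x ++ l₀)) := rfl
      _ ⊆ hProd (l ++ (List.replicate n x ++ l₀)) := hProd_cons_subset_append hx _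
      _ = hProd (List.replicate n x ++ (l ++ l₀)) := hProd_perm (List.perm_append_comm_assoc ..)
      _ ⊆ hProd ((List.replicate n l).flatten ++ (l ++ l₀)) :=
          hProd_replicate_append_subset hx n _
      _ = hProd ((List.replicate (n + 1) l).flatten ++ l₀) := by
          simp [List.replicate_succ']

theorem hPow_subset_hProd_flatten {x : G} {l : List G} (hx : x ∈ hProd l) (n : ℕ) :
    hPow x n ⊆ hProd (List.replicate n l).flatten := by
  simpa [hPow] using hProd_replicate_append_subset hx n []

theorem hPow_subset_of_mem_hmul {a b z : G} (hz : z ∈ hmul a b) (n : ℕ) :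
    hPow z n ⊆ hProd (List.replicate n a ++ List.replicate n b) :=
  (hPow_subset_hProd_flatten (l := [a, b]) (by rwa [hProd_pair]) n).trans
    (hProd_perm (List.flatten_replicate_pair_perm a b n)).subset

theorem hmul_subset_hProd_append {x y : G} {l₁ l₂ : List G} (hx : x ∈ hProd l₁)
    (hy : y ∈ hProd l₂) : hmul x y ⊆ hProd (l₁ ++ l₂) :=
  calc hmul x y = hProd [x, y] := (hProd_pair x y).symm
    _ ⊆ hProd (l₁ ++ [y]) := hProd_cons_subset_append hx [y]
    _ = hProd (y :: l₁) := hProd_perm (by simp)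
    _ ⊆ hProd (l₂ ++ l₁) := hProd_cons_subset_append hy l₁
    _ = hProd (l₁ ++ l₂) := hProd_perm List.perm_append_comm

end HyperProduct

namespace IsHyperideal

variable {A : Set G}

theorem zero_mem (hA : IsHyperideal A) : (0 : G) ∈ A := by
  obtain ⟨a, ha⟩ := hA.1
  simpa using hA.2.1 a ha a ha

theorem neg_mem (hA : IsHyperideal A) {a : G} (ha : a ∈ A) : -a ∈ A := by
  simpa using hA.2.1 0 hA.zero_mem a ha

theorem add_mem (hA : IsHyperideal A) {a b : G} (ha : a ∈ A) (hb : b ∈ A) : a + b ∈ A := by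
  simpa using hA.2.1 a ha (-b) (hA.neg_mem hb)

theorem hProd_append_subset (hA : IsHyperideal A) (l₁ : List G) {l₂ : List G} (hl₂ : l₂ ≠ [])
    (h : hProd l₂ ⊆ A) : hProd (l₁ ++ l₂) ⊆ A := by
  induction l₁ with
  | nil => exact h
  | cons a l₁ ih =>
    rw [List.cons_append, hProd_cons a (by simp [hl₂])]
    exact iUnion₂_subset fun x hx => hA.2.2 a x (ih hx)

theorem hProd_subset_of_subperm (hA : IsHyperideal A) {l₁ l₂ : List G} (hl : l₁.Subperm l₂)
    (hl₁ : l₁ ≠ []) (h : hProd l₁ ⊆ A) : hProd l₂ ⊆ A := by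
  obtain ⟨l, hl, hsub⟩ := hl
  obtain ⟨r, hr⟩ := hsub.exists_perm_append
  rw [hProd_perm (hr.trans List.perm_append_comm)]
  exact hA.hProd_append_subset r (by rintro rfl; exact hl₁ hl.symm.eq_nil)
    (hProd_perm hl ▸ h)

/-- Binomial expansion of `(a + b)ᴺ`; the prefix `l` is carried along for the induction. -/
theorem hProd_append_replicate_add_subset (hA : IsHyperideal A) (a b : G) :
    ∀ (N : ℕ) (l : List G),
      (∀ i j, i + j = N → hProd (l ++ List.replicate i a ++ List.replicate j b) ⊆ A) →
        hProd (l ++ List.replicate N (a + b)) ⊆ A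
  | 0, l, h => by simpa using h 0 0 rfl
  | N + 1, l, h => by
    set L := l ++ List.replicate N (a + b)
    rw [hProd_perm (show (l ++ List.replicate (N + 1) (a + b)).Perm ((a + b) :: L) by
      rw [List.replicate_succ]; exact List.perm_middle)]
    rcases eq_or_ne L [] with hL | hL
    · obtain ⟨rfl, rfl⟩ : l = [] ∧ N = 0 := by simpa [L] using hL
      have ha : a ∈ A := h 1 0 rfl rfl
      have hb : b ∈ A := h 0 1 rfl rfl
      exact singleton_subset_iff.mpr (hA.add_mem ha hb)
    have ha : hProd (a :: L) ⊆ A := by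
      refine hProd_append_replicate_add_subset hA a b N (a :: l) fun i j hij => ?_
      rw [hProd_perm (show (a :: l ++ List.replicate i a ++ List.replicate j b).Perm
        (l ++ List.replicate (i + 1) a ++ List.replicate j b) by
          simp only [List.replicate_succ, List.append_assoc, List.cons_append]
          exact List.perm_middle.symm)]
      exact h (i + 1) j (by omega)
    have hb : hProd (b :: L) ⊆ A := by
      refine hProd_append_replicate_add_subset hA a b N (b :: l) fun i j hij => ?_
      rw [hProd_perm (show (b :: l ++ List.replicate i a ++ List.replicate j b).Perm
        (l ++ List.replicate i a ++ List.replicate (j + 1) b) by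
          rw [List.replicate_succ]
          exact List.perm_middle.symm)]
      exact h i (j + 1) (by omega)
    rw [hProd_cons _ hL] at ha hb ⊢
    refine iUnion₂_subset fun z hz w hw => ?_
    rw [hmul_comm] at hw
    obtain ⟨u, hu, v, hv, rfl⟩ := hmul_add z a b hw
    rw [hmul_comm] at hu hv
    exact hA.add_mem (hmul_subset_smulSet a hz |>.trans ha hu)
      (hmul_subset_smulSet b hz |>.trans hb hv)

end IsHyperideal

section Radical

variable {A S : Set G}

theorem subset_rad : A ⊆ rad A := fun _ ha =>
  ⟨1, le_rfl, singleton_subset_iff.mpr ha⟩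

theorem IsHyperideal.mem_rad_of_mem_hmul (hA : IsHyperideal A) {a b z : G} (hz : z ∈ hmul a b)
    {n : ℕ} (hn : 1 ≤ n) {L : List G} (hL : L.Subperm (List.replicate n a ++ List.replicate n b))
    (hL₀ : L ≠ []) (hLA : hProd L ⊆ A) : z ∈ rad A :=
  ⟨n, hn, (hPow_subset_of_mem_hmul hz n).trans (hA.hProd_subset_of_subperm hL hL₀ hLA)⟩

theorem IsHyperideal.hmul_subset_rad (hA : IsHyperideal A) (r : G) {x : G} (hx : x ∈ rad A) :
    hmul r x ⊆ rad A := by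
  obtain ⟨n, hn, hxn⟩ := hx
  exact fun z hz => hA.mem_rad_of_mem_hmul hz hn (List.sublist_append_right _ _).subperm
    ((List.replicate_eq_nil_iff _).not.mpr (by omega)) hxn

theorem IsHyperideal.neg_mem_rad (hA : IsHyperideal A) {x : G} (hx : x ∈ rad A) : -x ∈ rad A := by
  have : -x ∈ hmul (-e) x := by
    rw [neg_hmul]
    exact mem_image_of_mem _ (e_mem x)
  exact hA.hmul_subset_rad (-e) hx this

theorem IsHyperideal.add_mem_rad (hA : IsHyperideal A) {x y : G} (hx : x ∈ rad A)
    (hy : y ∈ rad A) : x + y ∈ rad A := by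
  obtain ⟨m, hm, hxm⟩ := hx
  obtain ⟨n, hn, hyn⟩ := hy
  refine ⟨m + n, by omega, ?_⟩
  simpa [hPow] using hA.hProd_append_replicate_add_subset x y (m + n) [] fun i j hij => by
    rcases le_or_gt m i with hmi | hnj
    · refine hA.hProd_subset_of_subperm ?_ ((List.replicate_eq_nil_iff _).not.mpr (by omega)) hxm
      exact ((List.replicate_sublist_replicate x).mpr hmi).subperm.trans
        (List.sublist_append_left _ _).subperm
    · refine hA.hProd_subset_of_subperm ?_ ((List.replicate_eq_nil_iff _).not.mpr (by omega)) hyn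
      exact ((List.replicate_sublist_replicate y).mpr (by omega)).subperm.trans
        (List.sublist_append_right _ _).subperm

theorem isHyperideal_rad (hA : IsHyperideal A) : IsHyperideal (rad A) := by
  refine ⟨hA.1.mono subset_rad, fun x hx y hy => ?_, fun r x hx => hA.hmul_subset_rad r hx⟩
  rw [sub_eq_add_neg]
  exact hA.add_mem_rad hx (hA.neg_mem_rad hy)

theorem IsCHyperideal.hProd_flatten_subset (hA : IsCHyperideal A) {w : G} {l : List G}
    (hw : w ∈ hProd l) {n : ℕ} (hn : 1 ≤ n) (hwA : hPow w n ⊆ A) :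
    hProd (List.replicate n l).flatten ⊆ A := by
  obtain ⟨y, hy⟩ := hPow_nonempty w hn
  have hy' := hPow_subset_hProd_flatten hw n hy
  exact hA.2 _ (ne_nil_of_mem_hProd hy') ⟨y, hy', hwA hy⟩

/-- If `s ∈ t ∘ x` with `sᵐ ⊆ A`, the C-property puts all of `tᵐ ∘ uᵐⁿ` into `A`, and for
`z ∈ t ∘ u` the power `zᵐⁿ` lies in a hyperproduct having `tᵐ ∘ uᵐⁿ` as a factor. -/
theorem IsCHyperideal.hmul_subset_rad_of_mem_hPow (hA : IsCHyperideal A) {t u x : G} {n : ℕ}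
    (hn : 1 ≤ n) (hx : x ∈ hPow u n) (h : hmul t x ⊆ rad A) : hmul t u ⊆ rad A := by
  obtain ⟨s, hs⟩ := hmul_nonempty t x
  obtain ⟨m, hm, hsm⟩ := h hs
  have hs' : s ∈ hProd (t :: List.replicate n u) :=
    hmul_subset_hProd_append (l₁ := [t]) (mem_singleton t) hx hs
  have hmn : m ≤ m * n := Nat.le_mul_of_pos_right m hn
  have hsub : (List.replicate m (t :: List.replicate n u)).flatten.Subperm
      (List.replicate (m * n) t ++ List.replicate (m * n) u) := by
    refine (List.flatten_replicate_cons_perm t _ m).subperm.trans (List.Sublist.subperm ?_)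
    rw [List.flatten_replicate_replicate]
    exact ((List.replicate_sublist_replicate t).mpr hmn).append (List.Sublist.refl _)
  exact fun z hz => hA.1.mem_rad_of_mem_hmul hz (hm.trans hmn) hsub
    (List.flatten_ne_nil_iff.mpr ⟨_, List.mem_replicate.mpr ⟨by omega, rfl⟩, List.cons_ne_nil _ _⟩)
    (hA.hProd_flatten_subset hs' hm hsm)

theorem IsCHyperideal.exists_hmul_subset_of_hmul_subset_rad (hA : IsCHyperideal A) {u v : G}
    (huv : hmul u v ⊆ rad A) :
    ∃ n, 1 ≤ n ∧ ∃ x ∈ hPow u n, ∃ y ∈ hPow v n, hmul x y ⊆ A := by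
  obtain ⟨w, hw⟩ := hmul_nonempty u v
  obtain ⟨n, hn, hwn⟩ := huv hw
  have huvA := hA.hProd_flatten_subset (l := [u, v]) (by rwa [hProd_pair]) hn hwn
  obtain ⟨x, hx⟩ := hPow_nonempty u hn
  obtain ⟨y, hy⟩ := hPow_nonempty v hn
  refine ⟨n, hn, x, hx, y, hy, (hmul_subset_hProd_append hx hy).trans ?_⟩
  rwa [← hProd_perm (List.flatten_replicate_pair_perm u v n)]

theorem IsMCS.hPow_inter_nonempty (hS : IsMCS S) {s : G} (hs : s ∈ S) :
    ∀ n, 1 ≤ n → (hPow s n ∩ S).Nonempty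
  | 0, h => absurd h (by omega)
  | 1, _ => ⟨s, rfl, hs⟩
  | n + 2, _ => by
    obtain ⟨x, hx, hxS⟩ := hS.hPow_inter_nonempty hs (n + 1) (by omega)
    obtain ⟨y, hy, hyS⟩ := hS.2 s hs x hxS
    exact ⟨y, hmul_subset_smulSet s hx hy, hyS⟩

theorem IsMCS.rad_inter_eq_empty (hS : IsMCS S) (hAS : A ∩ S = ∅) : rad A ∩ S = ∅ := by
  refine eq_empty_of_forall_notMem fun s ⟨⟨n, hn, hsn⟩, hs⟩ => ?_
  obtain ⟨y, hy, hyS⟩ := hS.hPow_inter_nonempty hs n hn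
  exact hAS.subset ⟨hsn hy, hyS⟩

theorem IsQuasiSPrimary.rad_isSPrime (h : IsQuasiSPrimary S A) (hA : IsCHyperideal A)
    (hS : IsMCS S) : IsSPrime S (rad A) := by
  obtain ⟨-, hAS, t, htS, ht⟩ := h
  refine ⟨isHyperideal_rad hA.1, hS.rad_inter_eq_empty hAS, t, htS, fun u v huv => ?_⟩
  obtain ⟨n, hn, x, hx, y, hy, hxy⟩ := hA.exists_hmul_subset_of_hmul_subset_rad huv
  exact (ht x y hxy).imp (hA.hmul_subset_rad_of_mem_hPow hn hx)
    (hA.hmul_subset_rad_of_mem_hPow hn hy)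

theorem IsSPrime.isQuasiSPrimary_of_rad (h : IsSPrime S (rad A)) (hA : IsHyperideal A)
    (hAS : A ∩ S = ∅) : IsQuasiSPrimary S A := by
  obtain ⟨-, -, t, htS, ht⟩ := h
  exact ⟨hA, hAS, t, htS, fun u v huv => ht u v (huv.trans subset_rad)⟩

end Radical

end MulHyperring

open MulHyperring in
theorem quasiSPrimary_iff_rad_sPrime {G : Type*} [MulHyperring G] (A S : Set G) (hA : IsCHyperideal A)
    (hS : IsMCS S) (hAS : A ∩ S = ∅) :
    IsQuasiSPrimary S A ↔ IsSPrime S (rad A) :=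
  ⟨fun h => h.rad_isSPrime hA hS, fun h => h.isQuasiSPrimary_of_rad hA.1 hAS⟩
end

section
/- Let G₁, G₂ be commutative multiplicative hyperrings, η : G₁ → G₂ a hyperring good homomorphism, A₂ a C-hyperideal of G₂, and S an MCS of G₁ with 0 ∉ η(S). If A₂ is a quasi η(S)-primary hyperideal of G₂, then η⁻¹(A₂) is a quasi S-primary hyperideal of G₁. -/
open Set

namespace MulHyperring

/-- A hyperring good homomorphism. -/
structure IsGoodHom {G₁ G₂ : Type*} [MulHyperring G₁] [MulHyperring G₂]
    (η : G₁ → G₂) : Prop where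
  map_add : ∀ a b : G₁, η (a + b) = η a + η b
  map_hmul : ∀ a b : G₁, η '' (hmul a b) = hmul (η a) (η b)
  map_e : η (e : G₁) = (e : G₂)

end MulHyperring


/-! A good homomorphism maps hyperproducts, hence hyperpowers, onto hyperproducts, so
`a ∘ b ⊆ η⁻¹(B) ↔ η a ∘ η b ⊆ B` and `η⁻¹(rad A₂) ⊆ rad (η⁻¹(A₂))`. The witness `η t ∈ η(S)`
of `A₂` therefore pulls back to the witness `t ∈ S` of `η⁻¹(A₂)`. -/

namespace MulHyperring

theorem IsHyperideal.zero_mem_s8 {G : Type*} [MulHyperring G] {A : Set G} (hA : IsHyperideal A) :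
    (0 : G) ∈ A := by
  obtain ⟨x, hx⟩ := hA.1
  simpa using hA.2.1 x hx x hx

namespace IsGoodHom

variable {G₁ G₂ : Type*} [MulHyperring G₁] [MulHyperring G₂] {η : G₁ → G₂}

theorem map_zero (hη : IsGoodHom η) : η 0 = 0 := by
  simpa using (hη.map_add 0 0).symm

theorem map_sub (hη : IsGoodHom η) (a b : G₁) : η (a - b) = η a - η b :=
  eq_sub_of_add_eq (by rw [← hη.map_add, sub_add_cancel])

theorem hmul_subset_preimage_iff (hη : IsGoodHom η) {a b : G₁} {B : Set G₂} :
    hmul a b ⊆ η ⁻¹' B ↔ hmul (η a) (η b) ⊆ B := by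
  rw [← image_subset_iff, hη.map_hmul]

theorem image_smulSet (hη : IsGoodHom η) (a : G₁) (B : Set G₁) :
    η '' smulSet a B = smulSet (η a) (η '' B) := by
  simp only [smulSet, image_iUnion₂, hη.map_hmul, biUnion_image]

theorem image_hProd (hη : IsGoodHom η) : ∀ l : List G₁, η '' hProd l = hProd (l.map η)
  | [] => by simp [hProd]
  | [a] => by simp [hProd]
  | a :: b :: l => by
    simp only [hProd, List.map_cons, hη.image_smulSet, hη.image_hProd (b :: l)]

theorem image_hPow (hη : IsGoodHom η) (a : G₁) (n : ℕ) : η '' hPow a n = hPow (η a) n := by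
  rw [hPow, hPow, hη.image_hProd, List.map_replicate]

theorem preimage_rad_subset (hη : IsGoodHom η) (A : Set G₂) :
    η ⁻¹' rad A ⊆ rad (η ⁻¹' A) := by
  rintro a ⟨n, hn, hpow⟩
  exact ⟨n, hn, image_subset_iff.1 (hη.image_hPow a n ▸ hpow)⟩

theorem isHyperideal_preimage (hη : IsGoodHom η) {A : Set G₂} (hA : IsHyperideal A) :
    IsHyperideal (η ⁻¹' A) :=
  ⟨⟨0, show η 0 ∈ A from hη.map_zero ▸ hA.zero_mem_s8⟩,
    fun x hx y hy => show η (x - y) ∈ A from hη.map_sub x y ▸ hA.2.1 _ hx _ hy,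
    fun r x hx => hη.hmul_subset_preimage_iff.2 (hA.2.2 (η r) (η x) hx)⟩

end IsGoodHom

end MulHyperring

open MulHyperring in
theorem quasiSPrimary_preimage_general {G₁ G₂ : Type*} [MulHyperring G₁] [MulHyperring G₂]
    (η : G₁ → G₂) (hη : IsGoodHom η) (A₂ : Set G₂)
    (S : Set G₁)
    (h : IsQuasiSPrimary (η '' S) A₂) :
    IsQuasiSPrimary S (η ⁻¹' A₂) := by
  obtain ⟨hA₂, hdisj, _, ⟨t, htS, rfl⟩, ht⟩ := h
  have hdisj' : η ⁻¹' A₂ ∩ S = ∅ := by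
    rw [inter_comm, ← image_eq_empty (f := η), image_inter_preimage, inter_comm, hdisj]
  have pullback {u : G₁} (hu : hmul (η t) (η u) ⊆ rad A₂) :
      hmul t u ⊆ rad (η ⁻¹' A₂) :=
    (hη.hmul_subset_preimage_iff.2 hu).trans (hη.preimage_rad_subset A₂)
  refine ⟨hη.isHyperideal_preimage hA₂, hdisj', t, htS, fun u v huv => ?_⟩
  exact (ht (η u) (η v) (hη.hmul_subset_preimage_iff.1 huv)).imp pullback pullback

open MulHyperring in
theorem quasiSPrimary_preimage {G₁ G₂ : Type*} [MulHyperring G₁] [MulHyperring G₂]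
    (η : G₁ → G₂) (hη : IsGoodHom η) (A₂ : Set G₂) (hA₂ : IsCHyperideal A₂)
    (S : Set G₁) (hS : IsMCS S) (h0 : (0 : G₂) ∉ η '' S)
    (h : IsQuasiSPrimary (η '' S) A₂) :
    IsQuasiSPrimary S (η ⁻¹' A₂) :=
  quasiSPrimary_preimage_general η hη A₂ S h
end
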